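/- arXiv:1806.03396 — 4 statements merged into one kernel-verified Lean document; each statement's English description precedes it below -/
import Mathlib

section
/- Let λ₁, …, λₙ be negative real numbers. Then the Cauchy-type matrix Ψ with entries Ψ_{ij} = −1/(λ_i + λ_j) is symmetric positive definite, provided the λ_i are distinct. -/
/-!
Since `λᵢ + λⱼ < 0`, each entry is a Laplace-type integral,
`-1 / (λᵢ + λⱼ) = ∫₀^∞ e^{λᵢ t} e^{λⱼ t} dt`, so `Ψ` is the Gram matrix of the exponentials
`e^{λᵢ t}` in `L²(0, ∞)` and `xᵀ Ψ x = ∫₀^∞ (∑ xᵢ e^{λᵢ t})² dt ≥ 0`. For `x ≠ 0` the integrand is a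
continuous function that is not identically zero, because among the `λᵢ` with `xᵢ ≠ 0` the
largest one is attained only once and its term dominates as `t → ∞`.
-/

open Matrix MeasureTheory Set Filter Real Topology

lemma setIntegral_pos_of_continuous_of_nonneg {X : Type*} [TopologicalSpace X]
    [MeasurableSpace X] [OpensMeasurableSpace X] {μ : Measure X} [μ.IsOpenPosMeasure]
    {f : X → ℝ} {s : Set X} {x : X} (hs : IsOpen s) (hf : Continuous f)
    (hfs : IntegrableOn f s μ) (hf₀ : 0 ≤ f) (hx : x ∈ s) (hfx : f x ≠ 0) :
    0 < ∫ y in s, f y ∂μ := by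
  rw [setIntegral_pos_iff_support_of_nonneg_ae (.of_forall hf₀) hfs]
  exact (hf.isOpen_support.inter hs).measure_pos μ ⟨x, hfx, hx⟩

lemma integrableOn_exp_mul_mul_exp_mul {a b : ℝ} (hab : a + b < 0) :
    IntegrableOn (fun t => exp (a * t) * exp (b * t)) (Ioi 0) := by
  simpa only [← exp_add, ← add_mul] using integrableOn_exp_mul_Ioi hab 0

lemma integral_exp_mul_mul_exp_mul {a b : ℝ} (hab : a + b < 0) :
    ∫ t in Ioi 0, exp (a * t) * exp (b * t) = -1 / (a + b) := by
  simp_rw [← exp_add, ← add_mul]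
  rw [integral_exp_mul_Ioi hab, mul_zero, exp_zero]

section ExponentialSums

variable {ι : Type*} [Fintype ι]

lemma tendsto_sum_mul_exp_sub_mul_atTop {l x : ι → ℝ} (hl : Function.Injective l) {i : ι}
    (hmax : ∀ j, x j ≠ 0 → l j ≤ l i) :
    Tendsto (fun t => ∑ j, x j * exp ((l j - l i) * t)) atTop (𝓝 (x i)) := by
  classical
  have hlim : ∀ j, Tendsto (fun t => x j * exp ((l j - l i) * t)) atTop
      (𝓝 ((Pi.single i (x i) : ι → ℝ) j)) := by
    intro j
    rcases eq_or_ne j i with rfl | hji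
    · simp
    rcases eq_or_ne (x j) 0 with hxj | hxj
    · simp [hxj, hji]
    have hlt : l j - l i < 0 := sub_neg.2 <| (hmax j hxj).lt_of_ne fun h => hji (hl h)
    simpa [hji] using
      (tendsto_exp_atBot.comp (tendsto_id.const_mul_atTop_of_neg hlt)).const_mul (x j)
  simpa using tendsto_finsetSum Finset.univ fun j _ => hlim j

lemma eventually_sum_mul_exp_mul_ne_zero {l x : ι → ℝ} (hl : Function.Injective l)
    (hx : x ≠ 0) : ∀ᶠ t in atTop, ∑ j, x j * exp (l j * t) ≠ 0 := by
  obtain ⟨i, hxi, hmax⟩ := Finset.exists_max_image {j | x j ≠ 0} l <| by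
    obtain ⟨j, hj⟩ := Function.ne_iff.1 hx
    exact ⟨j, by simpa using hj⟩
  have hdominant := tendsto_sum_mul_exp_sub_mul_atTop hl (i := i)
    fun j hj => hmax j (by simpa using hj)
  filter_upwards [hdominant.eventually_ne (by simpa using hxi)] with t ht
  have hfactor : ∑ j, x j * exp (l j * t)
      = exp (l i * t) * ∑ j, x j * exp ((l j - l i) * t) := by
    rw [Finset.mul_sum]
    refine Finset.sum_congr rfl fun j _ => ?_
    rw [mul_left_comm, ← exp_add]
    ring_nf
  rw [hfactor]
  exact mul_ne_zero (exp_pos _).ne' ht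

lemma sum_mul_exp_mul_sq (l x : ι → ℝ) (t : ℝ) :
    (∑ i, x i * exp (l i * t)) ^ 2
      = ∑ i, ∑ j, x i * x j * (exp (l i * t) * exp (l j * t)) := by
  rw [sq, Finset.sum_mul_sum]
  simp only [mul_mul_mul_comm]

lemma integrableOn_sum_mul_exp_mul_sq {l : ι → ℝ} (hl : ∀ i, l i < 0) (x : ι → ℝ) :
    IntegrableOn (fun t => (∑ i, x i * exp (l i * t)) ^ 2) (Ioi 0) := by
  simp_rw [sum_mul_exp_mul_sq]
  exact integrable_finsetSum _ fun i _ => integrable_finsetSum _ fun j _ =>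
    (integrableOn_exp_mul_mul_exp_mul (add_neg (hl i) (hl j))).const_mul _

lemma dotProduct_mulVec_cauchy_eq_integral {l : ι → ℝ} (hl : ∀ i, l i < 0) (x : ι → ℝ) :
    x ⬝ᵥ (Matrix.of fun i j => -1 / (l i + l j)) *ᵥ x
      = ∫ t in Ioi 0, (∑ i, x i * exp (l i * t)) ^ 2 := by
  have hint : ∀ i j, IntegrableOn
      (fun t => x i * x j * (exp (l i * t) * exp (l j * t))) (Ioi 0) := fun i j =>
    (integrableOn_exp_mul_mul_exp_mul (add_neg (hl i) (hl j))).const_mul _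
  simp_rw [sum_mul_exp_mul_sq]
  rw [integral_finsetSum _ fun i _ => integrable_finsetSum _ fun j _ => hint i j]
  simp_rw [integral_finsetSum _ fun j _ => hint _ j, integral_const_mul,
    integral_exp_mul_mul_exp_mul (add_neg (hl _) (hl _))]
  simp only [dotProduct, mulVec, of_apply, Finset.mul_sum]
  refine Finset.sum_congr rfl fun i _ => Finset.sum_congr rfl fun j _ => ?_
  ring

end ExponentialSums

theorem cauchy_matrix_posdef
    (n : ℕ) (l : Fin n → ℝ)
    (hneg : ∀ i, l i < 0) (hinj : Function.Injective l) :
    (Matrix.of fun i j : Fin n => -1 / (l i + l j)).IsSymm ∧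
      ∀ x : Fin n → ℝ, x ≠ 0 →
        0 < x ⬝ᵥ (Matrix.of fun i j : Fin n => -1 / (l i + l j)) *ᵥ x := by
  refine ⟨by ext i j; simp [add_comm], fun x hx => ?_⟩
  obtain ⟨t, hxt, ht⟩ :=
    ((eventually_sum_mul_exp_mul_ne_zero hinj hx).and (eventually_gt_atTop 0)).exists
  rw [dotProduct_mulVec_cauchy_eq_integral hneg]
  exact setIntegral_pos_of_continuous_of_nonneg isOpen_Ioi (by fun_prop)
    (integrableOn_sum_mul_exp_mul_sq hneg x) (fun _ => sq_nonneg _) ht (pow_ne_zero 2 hxt)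
end

section
/- Let A be symmetric negative definite with eigendecomposition A = ΘΛΘ᷀, Λ = diag(λ₁,…,λₙ), and suppose K, Σ solve A᷀K + KA + I = 0 and AΣ + ΣA᷀ + I = 0, and M, N solve AM + MA᷀ + ΣCΣ = 0, A᷀N + NA + KBK = 0 with B = b̄b̄᷀, C = c̄c̄᷀. If the supports of β = Λ⁻¹Θ᷀b̄ and γ = Λ⁻¹Θ᷀c̄ are disjoint, then MN = 0, and hence tr(A᷀MN + NMA) = 0. -/
/-!
Conjugation by `Θ` is an algebra automorphism taking `A` to `Λ = diagonal l`, with `l < 0` by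
negative definiteness. In that basis the Lyapunov operator `X ↦ ΛX + XΛ` multiplies the entry
`(i, j)` by `l i + l j ≠ 0`, so `K` and `Σ` become diagonal, `KBK` becomes the rank-one matrix
`(Kb)(Kb)ᵀ`, and `N = diag(Kb) H diag(Kb)` with `H i j = -(l i + l j)⁻¹`; likewise for `M` with `c`.
The product `MN` then contains the factor `diag(Σc) diag(Kb)`, which vanishes since `Kb` and `Σc`
have the supports of `β` and `γ`. The same holds for `NM`, which kills the trace.
-/

open Matrix

section DiagonalLyapunov

variable {ι 𝕜 : Type*} [Fintype ι] [DecidableEq ι] [Field 𝕜] {d : ι → 𝕜}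

theorem apply_eq_of_diagonal_lyapunov (hd : ∀ i j, d i + d j ≠ 0) {X R : Matrix ι ι 𝕜}
    (h : diagonal d * X + X * diagonal d + R = 0) (i j : ι) :
    X i j = -R i j / (d i + d j) := by
  have hij := congrFun₂ h i j
  simp only [Matrix.add_apply, diagonal_mul, mul_diagonal, Matrix.zero_apply] at hij
  rw [eq_div_iff (hd i j)]
  linear_combination hij

theorem eq_diagonal_of_diagonal_lyapunov_one (hd : ∀ i j, d i + d j ≠ 0) {X : Matrix ι ι 𝕜}
    (h : diagonal d * X + X * diagonal d + 1 = 0) :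
    X = diagonal fun i => -(d i + d i)⁻¹ := by
  ext i j
  rw [apply_eq_of_diagonal_lyapunov hd h]
  rcases eq_or_ne i j with rfl | hij
  · simp [neg_div]
  · simp [hij]

theorem eq_diagonal_mul_mul_diagonal_of_diagonal_lyapunov_vecMulVec
    (hd : ∀ i j, d i + d j ≠ 0) {X : Matrix ι ι 𝕜} {u v : ι → 𝕜}
    (h : diagonal d * X + X * diagonal d + vecMulVec u v = 0) :
    X = diagonal u * of (fun i j => -(d i + d j)⁻¹) * diagonal v := by
  ext i j
  rw [apply_eq_of_diagonal_lyapunov hd h]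
  simp only [diagonal_mul, mul_diagonal, of_apply, vecMulVec_apply]
  ring

theorem mul_eq_zero_of_diagonal_lyapunov {b c : ι → 𝕜} {K S M N : Matrix ι ι 𝕜}
    (hd : ∀ i j, d i + d j ≠ 0)
    (hK : diagonal d * K + K * diagonal d + 1 = 0) (hS : diagonal d * S + S * diagonal d + 1 = 0)
    (hM : diagonal d * M + M * diagonal d + S * vecMulVec c c * S = 0)
    (hN : diagonal d * N + N * diagonal d + K * vecMulVec b b * K = 0)
    (hcb : ∀ k, c k * b k = 0) :
    M * N = 0 := by
  set κ : ι → 𝕜 := fun i => -(d i + d i)⁻¹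
  rw [show K = diagonal κ from eq_diagonal_of_diagonal_lyapunov_one hd hK, mul_vecMulVec,
    vecMulVec_mul] at hN
  rw [show S = diagonal κ from eq_diagonal_of_diagonal_lyapunov_one hd hS, mul_vecMulVec,
    vecMulVec_mul] at hM
  have hvanish : (fun k => (c ᵥ* diagonal κ) k * (diagonal κ *ᵥ b) k) = 0 := funext fun k => by
    simp only [mulVec_diagonal, vecMul_diagonal, Pi.zero_apply]
    linear_combination κ k ^ 2 * hcb k
  rw [eq_diagonal_mul_mul_diagonal_of_diagonal_lyapunov_vecMulVec hd hM,
    eq_diagonal_mul_mul_diagonal_of_diagonal_lyapunov_vecMulVec hd hN]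
  simp only [Matrix.mul_assoc]
  rw [← Matrix.mul_assoc (diagonal _) (diagonal _), diagonal_mul_diagonal, hvanish]
  simp

end DiagonalLyapunov

theorem mul_eq_zero_of_inv_diagonal_mulVec_mul_eq_zero {ι 𝕜 : Type*} [Fintype ι] [DecidableEq ι]
    [Field 𝕜] {l u v : ι → 𝕜} (hl : ∀ i, l i ≠ 0)
    (h : ∀ i, ((diagonal l)⁻¹ *ᵥ u) i * ((diagonal l)⁻¹ *ᵥ v) i = 0) (i : ι) :
    u i * v i = 0 := by
  have hD : IsUnit (diagonal l).det := by simp [det_diagonal, Finset.prod_ne_zero_iff, hl]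
  have hinv : ∀ w, w = diagonal l *ᵥ ((diagonal l)⁻¹ *ᵥ w) := fun w => by
    rw [mulVec_mulVec, mul_nonsing_inv _ hD, one_mulVec]
  rw [hinv u, hinv v, mulVec_diagonal, mulVec_diagonal]
  linear_combination l i ^ 2 * h i

theorem apply_lt_zero_of_dotProduct_mulVec_neg {ι R : Type*} [Fintype ι] [DecidableEq ι]
    [CommRing R] [Nontrivial R] [LT R] {Θ : Matrix ι ι R} {l : ι → R} (hΘ : Θᵀ * Θ = 1)
    (hneg : ∀ x : ι → R, x ≠ 0 → x ⬝ᵥ (Θ * diagonal l * Θᵀ) *ᵥ x < 0) (i : ι) :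
    l i < 0 := by
  have hx : Θᵀ *ᵥ (Θ *ᵥ Pi.single i 1) = Pi.single i 1 := by
    rw [mulVec_mulVec, hΘ, one_mulVec]
  have hx0 : Θ *ᵥ Pi.single i 1 ≠ 0 := fun h0 => by
    simpa [h0] using congrFun hx i
  have hq : (Θ *ᵥ Pi.single i 1) ⬝ᵥ (Θ * diagonal l * Θᵀ) *ᵥ (Θ *ᵥ Pi.single i 1) = l i := by
    rw [← mulVec_mulVec, ← mulVec_mulVec, dotProduct_mulVec, ← mulVec_transpose, hx]
    simp
  exact hq ▸ hneg _ hx0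

theorem disjoint_supports_MN_zero_general
    (n : ℕ) (A Θ Λ : Matrix (Fin n) (Fin n) ℝ) (l : Fin n → ℝ)
    (hneg : ∀ x : Fin n → ℝ, x ≠ 0 → x ⬝ᵥ A *ᵥ x < 0)
    (hΘ : Θᵀ * Θ = 1) (hΛ : Λ = Matrix.diagonal l) (hdecomp : A = Θ * Λ * Θᵀ)
    (b c : Fin n → ℝ)
    (B C K Sg M N : Matrix (Fin n) (Fin n) ℝ)
    (hB : B = vecMulVec b b) (hC : C = vecMulVec c c)
    (hK : Aᵀ * K + K * A + 1 = 0) (hSg : A * Sg + Sg * Aᵀ + 1 = 0)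
    (hM : A * M + M * Aᵀ + Sg * C * Sg = 0)
    (hN : Aᵀ * N + N * A + K * B * K = 0)
    (β γ : Fin n → ℝ)
    (hβ : β = (Matrix.diagonal l)⁻¹ *ᵥ (Θᵀ *ᵥ b))
    (hγ : γ = (Matrix.diagonal l)⁻¹ *ᵥ (Θᵀ *ᵥ c))
    (hdisj : ∀ i, β i * γ i = 0) :
    M * N = 0 ∧ (Aᵀ * M * N + N * M * A).trace = 0 := by
  subst hΛ hB hC
  have hl := apply_lt_zero_of_dotProduct_mulVec_neg hΘ (hdecomp ▸ hneg)
  have hd : ∀ i j, l i + l j ≠ 0 := fun i j => (add_neg (hl i) (hl j)).ne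
  have hcb : ∀ k, (Θᵀ *ᵥ c) k * (Θᵀ *ᵥ b) k = 0 :=
    mul_eq_zero_of_inv_diagonal_mulVec_mul_eq_zero (fun i => (hl i).ne) fun i => by
      rw [← hβ, ← hγ, mul_comm, hdisj]
  have hAt : Aᵀ = A := by simp [hdecomp, Matrix.mul_assoc]
  rw [hAt] at hK hSg hM hN
  have hU : Θ ∈ unitary (Matrix (Fin n) (Fin n) ℝ) := by
    simpa [Matrix.mem_unitaryGroup_iff', star_eq_conjTranspose] using hΘ
  set φ := Unitary.conjStarAlgAut ℝ (Matrix (Fin n) (Fin n) ℝ) (star ⟨Θ, hU⟩)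
  have hφ : ∀ X, φ X = Θᵀ * X * Θ := fun X => by simp [φ, star_eq_conjTranspose]
  have hφA : φ A = diagonal l := by
    simp [hφ, hdecomp, Matrix.mul_assoc, hΘ, ← Matrix.mul_assoc Θᵀ Θ]
  have hφvec : ∀ v, φ (vecMulVec v v) = vecMulVec (Θᵀ *ᵥ v) (Θᵀ *ᵥ v) := fun v => by
    rw [hφ, mul_vecMulVec, vecMulVec_mul, mulVec_transpose]
  apply_fun φ at hK hSg hM hN
  simp only [map_add, map_mul, map_one, map_zero, hφA, hφvec] at hK hSg hM hN
  have hMN : φ (M * N) = 0 := by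
    rw [map_mul]
    exact mul_eq_zero_of_diagonal_lyapunov hd hK hSg hM hN hcb
  have hNM : φ (N * M) = 0 := by
    rw [map_mul]
    exact mul_eq_zero_of_diagonal_lyapunov hd hSg hK hN hM fun k => by rw [mul_comm, hcb]
  rw [map_eq_zero_iff φ φ.injective] at hMN hNM
  exact ⟨hMN, by simp [Matrix.mul_assoc, hMN, hNM]⟩

theorem disjoint_supports_MN_zero
    (n : ℕ) (A Θ Λ : Matrix (Fin n) (Fin n) ℝ) (l : Fin n → ℝ)
    (hA : A.IsSymm) (hneg : ∀ x : Fin n → ℝ, x ≠ 0 → x ⬝ᵥ A *ᵥ x < 0)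
    (hΘ : Θᵀ * Θ = 1) (hΛ : Λ = Matrix.diagonal l) (hdecomp : A = Θ * Λ * Θᵀ)
    (b c : Fin n → ℝ)
    (B C K Sg M N : Matrix (Fin n) (Fin n) ℝ)
    (hB : B = vecMulVec b b) (hC : C = vecMulVec c c)
    (hK : Aᵀ * K + K * A + 1 = 0) (hSg : A * Sg + Sg * Aᵀ + 1 = 0)
    (hM : A * M + M * Aᵀ + Sg * C * Sg = 0)
    (hN : Aᵀ * N + N * A + K * B * K = 0)
    (β γ : Fin n → ℝ)
    (hβ : β = (Matrix.diagonal l)⁻¹ *ᵥ (Θᵀ *ᵥ b))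
    (hγ : γ = (Matrix.diagonal l)⁻¹ *ᵥ (Θᵀ *ᵥ c))
    (hdisj : ∀ i, β i * γ i = 0) :
    M * N = 0 ∧ (Aᵀ * M * N + N * M * A).trace = 0 :=
  disjoint_supports_MN_zero_general n A Θ Λ l hneg hΘ hΛ hdecomp b c B C K Sg M N hB hC hK hSg hM hN
    β γ hβ hγ hdisj
end

section
/- Let Λ = diag(λ₁,…,λₙ) with 0 > λ₁ > … > λₙ and ε, δ ≥ 0. With B = C = e₁e₁᷀, K = diag(1/(√(λ₁²+ε)−λ₁), −1/(2λ₂),…,−1/(2λₙ)), Σ = diag(1/(√(λ₁²+δ)−λ₁), −1/(2λ₂),…,−1/(2λₙ)), the value Φ = tr(Λ᷀KΣ + ΣKΛ + K + Σ) equals (√(λ₁²+ε) + √(λ₁²+δ)) / ((√(λ₁²+ε) − λ₁)(√(λ₁²+δ) − λ₁)) − Σ_{k=2}^{n} 1/(2λ_k). -/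
open Matrix

theorem optimal_cost_value
    (n : ℕ) (l : Fin (n + 1) → ℝ)
    (hneg : ∀ i, l i < 0) (hdec : StrictAnti l)
    (ε δ : ℝ) (hε : 0 ≤ ε) (hδ : 0 ≤ δ) :
    let Λ : Matrix (Fin (n + 1)) (Fin (n + 1)) ℝ := Matrix.diagonal l
    let K : Matrix (Fin (n + 1)) (Fin (n + 1)) ℝ :=
      Matrix.diagonal fun i =>
        if i = 0 then 1 / (Real.sqrt ((l 0) ^ 2 + ε) - l 0) else -1 / (2 * l i)
    let Sg : Matrix (Fin (n + 1)) (Fin (n + 1)) ℝ :=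
      Matrix.diagonal fun i =>
        if i = 0 then 1 / (Real.sqrt ((l 0) ^ 2 + δ) - l 0) else -1 / (2 * l i)
    (Λᵀ * K * Sg + Sg * K * Λ + K + Sg).trace =
      (Real.sqrt ((l 0) ^ 2 + ε) + Real.sqrt ((l 0) ^ 2 + δ)) /
          ((Real.sqrt ((l 0) ^ 2 + ε) - l 0) * (Real.sqrt ((l 0) ^ 2 + δ) - l 0)) -
        ∑ i ∈ Finset.univ.erase (0 : Fin (n + 1)), 1 / (2 * l i) := by
  intro Λ K Sg
  have h0 : l 0 < 0 := hneg 0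
  have ha : 0 < Real.sqrt ((l 0) ^ 2 + ε) - l 0 := by
    have := Real.sqrt_nonneg ((l 0) ^ 2 + ε); linarith
  have hb : 0 < Real.sqrt ((l 0) ^ 2 + δ) - l 0 := by
    have := Real.sqrt_nonneg ((l 0) ^ 2 + δ); linarith
  simp only [Λ, K, Sg, Matrix.diagonal_transpose, Matrix.diagonal_mul_diagonal,
    Matrix.diagonal_add, Matrix.trace_diagonal]
  rw [← Finset.add_sum_erase _ _ (Finset.mem_univ (0 : Fin (n + 1)))]
  have e2 : ∀ i ∈ Finset.univ.erase (0 : Fin (n + 1)),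
      (((l i * if i = 0 then 1 / (Real.sqrt ((l 0) ^ 2 + ε) - l 0) else -1 / (2 * l i)) *
            if i = 0 then 1 / (Real.sqrt ((l 0) ^ 2 + δ) - l 0) else -1 / (2 * l i)) +
          ((if i = 0 then 1 / (Real.sqrt ((l 0) ^ 2 + δ) - l 0) else -1 / (2 * l i)) *
              if i = 0 then 1 / (Real.sqrt ((l 0) ^ 2 + ε) - l 0) else -1 / (2 * l i)) * l i +
          (if i = 0 then 1 / (Real.sqrt ((l 0) ^ 2 + ε) - l 0) else -1 / (2 * l i))) +
        (if i = 0 then 1 / (Real.sqrt ((l 0) ^ 2 + δ) - l 0) else -1 / (2 * l i)) =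
      -(1 / (2 * l i)) := by
    intro i hi
    have hi0 : i ≠ 0 := Finset.ne_of_mem_erase hi
    have hli : l i ≠ 0 := ne_of_lt (hneg i)
    simp only [if_neg hi0]
    field_simp
    ring
  rw [Finset.sum_congr rfl e2, Finset.sum_neg_distrib, ← sub_eq_add_neg]
  simp only [reduceIte]
  congr 1
  field_simp
  ring
end

section
/- Let Λ = diag(λ₁,…,λₙ) with λ_i < 0 distinct, Ψ_{ij} = −1/(λ_i+λ_j), and s a sign vector supported on I' ⊆ {1,…,n}. If (β,γ) solves the coupled system diag(γ)Ψdiag(γ)β = μΛ²β, diag(β)Ψdiag(β)γ = μΛ²γ with common support I', normalization β᷀Λ²β = γ᷀Λ²γ = 1, and γ = s*β (Hadamard product), then the entrywise square β*β restricted to I' is proportional to the solution x of (diag(s)Ψdiag(s)) x = (s_id * λ * λ) restricted to I', where s_id is the indicator vector of I' and λ = (λ₁,…,λₙ). In particular, for fixed I' and s there is at most one such (β*β). -/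
/-!
Since `-1 / (a + b) = ∫ t in Ioi 0, exp (a t) exp (b t)` for `a, b < 0`, the quadratic form
of `Ψ` is `w ↦ ∫₀^∞ (∑ wᵢ exp (λᵢ t))²`, and distinct exponentials are linearly independent,
so `Ψ` is positive definite. Substituting `γ = s * β` into the first equation and cancelling
`βᵢ ≠ 0` shows that `β * β` solves `(diag s Ψ diag s) y = μ λ²` on `I'`. Positive
definiteness of `Ψ` on vectors supported in `I'` makes this system uniquely solvable there,
so `β * β = μ x`; for two solutions `β, β'` this gives `μ' β² = μ β'²`, and the normalization
`∑ λᵢ² βᵢ² = 1` forces `μ' = μ`, which is nonzero.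
-/

open Matrix MeasureTheory Set Real

section CauchyMatrix

variable {ι : Type*} [Fintype ι] {l : ι → ℝ}

theorem eq_zero_of_forall_sum_mul_exp_eq_zero (hl : Function.Injective l) {w : ι → ℝ}
    (hw : ∀ t > 0, ∑ i, w i * exp (l i * t) = 0) : w = 0 := by
  let e := Fintype.equivFin ι
  -- Sampling at `t = k + 1` gives a Vandermonde system in the nodes `exp (l i)`.
  have hv : (fun k => w (e.symm k) * exp (l (e.symm k))) = 0 := by
    refine eq_zero_of_forall_pow_sum_mul_pow_eq_zero
      (Real.exp_injective.comp (hl.comp e.symm.injective)) fun k => ?_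
    rw [← hw (k + 1) (by positivity), ← e.symm.sum_comp]
    refine Finset.sum_congr rfl fun i _ => ?_
    simp only [Function.comp_apply, ← Real.exp_nat_mul, mul_assoc, ← Real.exp_add]
    ring_nf
  funext i
  simpa [exp_ne_zero] using congrFun hv (e i)

theorem integrableOn_exp_mul_mul_exp_mul_Ioi {a b : ℝ} (ha : a < 0) (hb : b < 0) :
    IntegrableOn (fun t => exp (a * t) * exp (b * t)) (Ioi 0) := by
  simp only [← exp_add, ← add_mul]
  exact integrableOn_exp_mul_Ioi (by linarith) 0

theorem integral_exp_mul_mul_exp_mul_Ioi {a b : ℝ} (ha : a < 0) (hb : b < 0) :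
    ∫ t in Ioi 0, exp (a * t) * exp (b * t) = -1 / (a + b) := by
  simp only [← exp_add, ← add_mul]
  rw [integral_exp_mul_Ioi (by linarith), mul_zero, exp_zero]

theorem sq_sum_mul_exp_eq (w : ι → ℝ) (t : ℝ) :
    (∑ i, w i * exp (l i * t)) ^ 2 = ∑ i, ∑ j, w i * w j * (exp (l i * t) * exp (l j * t)) := by
  simp_rw [sq, Finset.sum_mul_sum, mul_mul_mul_comm]

theorem integrableOn_sq_sum_mul_exp_Ioi (hl : ∀ i, l i < 0) (w : ι → ℝ) :
    IntegrableOn (fun t => (∑ i, w i * exp (l i * t)) ^ 2) (Ioi 0) := by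
  simp_rw [sq_sum_mul_exp_eq]
  exact integrable_finsetSum _ fun i _ => integrable_finsetSum _ fun j _ =>
    (integrableOn_exp_mul_mul_exp_mul_Ioi (hl i) (hl j)).const_mul _

theorem dotProduct_cauchy_mulVec_eq_integral (hl : ∀ i, l i < 0) (w : ι → ℝ) :
    w ⬝ᵥ (Matrix.of fun i j => -1 / (l i + l j)) *ᵥ w
      = ∫ t in Ioi 0, (∑ i, w i * exp (l i * t)) ^ 2 := by
  have hint i j := ((integrableOn_exp_mul_mul_exp_mul_Ioi (hl i) (hl j)).const_mul (w i * w j))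
  simp_rw [sq_sum_mul_exp_eq]
  rw [integral_finsetSum _ fun i _ => integrable_finsetSum _ fun j _ => hint i j]
  simp_rw [integral_finsetSum _ fun j _ => hint _ j, integral_const_mul,
    integral_exp_mul_mul_exp_mul_Ioi (hl _) (hl _), dotProduct, mulVec, dotProduct,
    Finset.mul_sum, of_apply]
  exact Finset.sum_congr rfl fun i _ => Finset.sum_congr rfl fun j _ => by ring

theorem posDef_cauchy (hl : ∀ i, l i < 0) (hinj : Function.Injective l) :
    (Matrix.of fun i j => -1 / (l i + l j)).PosDef := by
  refine posDef_iff_dotProduct_mulVec.mpr ⟨?_, fun w hw => ?_⟩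
  · ext i j
    simp [add_comm]
  set f := fun t => ∑ i, w i * exp (l i * t)
  obtain ⟨t₀, ht₀, hft₀⟩ : ∃ t > 0, f t ≠ 0 := by
    by_contra! h
    exact hw (eq_zero_of_forall_sum_mul_exp_eq_zero hinj h)
  have hf : Continuous fun t => f t ^ 2 := by fun_prop
  rw [star_trivial, dotProduct_cauchy_mulVec_eq_integral hl,
    setIntegral_pos_iff_support_of_nonneg_ae (.of_forall fun t => sq_nonneg _)
      (integrableOn_sq_sum_mul_exp_Ioi hl w)]
  exact (hf.isOpen_support.inter isOpen_Ioi).measure_pos _ ⟨t₀, pow_ne_zero 2 hft₀, ht₀⟩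

end CauchyMatrix

section RestrictedSystem

variable {ι R : Type*} [Fintype ι]

theorem Matrix.PosDef.eq_zero_of_mulVec_eq_zero_on [Ring R] [PartialOrder R] [StarRing R]
    {M : Matrix ι ι R} (hM : M.PosDef) {I : Set ι} {w : ι → R} (hw : ∀ i ∉ I, w i = 0)
    (hMw : ∀ i ∈ I, (M *ᵥ w) i = 0) : w = 0 := by
  by_contra hne
  refine (hM.dotProduct_mulVec_pos hne).ne' (Finset.sum_eq_zero fun i _ => ?_)
  by_cases hi : i ∈ I
  · simp [hMw i hi]
  · simp [hw i hi]

theorem diagonal_mul_mul_diagonal_mulVec_apply [DecidableEq ι] [CommRing R] (s : ι → R)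
    (M : Matrix ι ι R) (v : ι → R) (i : ι) :
    ((diagonal s * M * diagonal s) *ᵥ v) i = s i * (M *ᵥ fun j => s j * v j) i := by
  rw [← mulVec_mulVec, ← mulVec_mulVec, mulVec_diagonal]
  congr 2
  exact funext (mulVec_diagonal s v)

theorem Matrix.PosDef.eq_of_diagonal_mul_mul_diagonal_mulVec_eq_on [DecidableEq ι]
    [CommRing R] [PartialOrder R] [StarRing R] [NoZeroDivisors R]
    {M : Matrix ι ι R} (hM : M.PosDef) {I : Set ι} {s : ι → R} (hs : ∀ i ∈ I, s i ≠ 0)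
    {x y : ι → R} (hx : ∀ i ∉ I, x i = 0) (hy : ∀ i ∉ I, y i = 0)
    (hxy : ∀ i ∈ I,
      ((diagonal s * M * diagonal s) *ᵥ x) i = ((diagonal s * M * diagonal s) *ᵥ y) i) :
    x = y := by
  have hzero : (fun j => s j * (x - y) j) = 0 := by
    refine hM.eq_zero_of_mulVec_eq_zero_on (I := I) (fun i hi => by simp [hx i hi, hy i hi])
      fun i hi => ?_
    have := hxy i hi
    rw [← sub_eq_zero, ← Pi.sub_apply, ← mulVec_sub,
      diagonal_mul_mul_diagonal_mulVec_apply] at this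
    exact (mul_eq_zero.mp this).resolve_left (hs i hi)
  funext i
  by_cases hi : i ∈ I
  · simpa [sub_eq_zero, hs i hi] using congrFun hzero i
  · rw [hx i hi, hy i hi]

theorem Matrix.PosDef.smul_eq_smul_of_diagonal_mul_mul_diagonal_mulVec_eq_on [DecidableEq ι]
    [CommRing R] [PartialOrder R] [StarRing R] [NoZeroDivisors R]
    {M : Matrix ι ι R} (hM : M.PosDef) {I : Set ι} {s : ι → R} (hs : ∀ i ∈ I, s i ≠ 0)
    {x y r : ι → R} {a b : R} (hx : ∀ i ∉ I, x i = 0) (hy : ∀ i ∉ I, y i = 0)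
    (hxr : ∀ i ∈ I, ((diagonal s * M * diagonal s) *ᵥ x) i = a * r i)
    (hyr : ∀ i ∈ I, ((diagonal s * M * diagonal s) *ᵥ y) i = b * r i) :
    b • x = a • y :=
  hM.eq_of_diagonal_mul_mul_diagonal_mulVec_eq_on hs (fun i hi => by simp [hx i hi])
    (fun i hi => by simp [hy i hi]) fun i hi => by
      simp only [mulVec_smul, Pi.smul_apply, hxr i hi, hyr i hi, smul_eq_mul]
      ring

end RestrictedSystem

section SquaredSystem

variable {ι R : Type*} [Fintype ι] [DecidableEq ι] [CommRing R]

theorem diagonal_mul_mul_diagonal_mulVec_sq_apply [NoZeroDivisors R] {Ψ : Matrix ι ι R}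
    {s β l : ι → R} {μ : R}
    (h : (diagonal (fun i => s i * β i) * Ψ * diagonal (fun i => s i * β i)) *ᵥ β
      = μ • ((diagonal l * diagonal l) *ᵥ β)) {I : Set ι} (hβ : ∀ i ∈ I, β i ≠ 0) :
    ∀ i ∈ I, ((diagonal s * Ψ * diagonal s) *ᵥ fun j => β j ^ 2) i = μ * l i ^ 2 := by
  intro i hi
  have hi' := congrFun h i
  simp only [diagonal_mul_mul_diagonal_mulVec_apply, Pi.smul_apply, diagonal_mul_diagonal,
    mulVec_diagonal, smul_eq_mul] at hi' ⊢
  have hsq : (fun j => s j * β j * β j) = fun j => s j * β j ^ 2 := funext fun j => by ring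
  rw [hsq] at hi'
  exact mul_left_cancel₀ (hβ i hi) (by linear_combination hi')

theorem dotProduct_diagonal_mul_diagonal_mulVec_self (l v : ι → R) :
    v ⬝ᵥ (diagonal l * diagonal l) *ᵥ v = (fun i => l i ^ 2) ⬝ᵥ fun i => v i ^ 2 := by
  simp only [dotProduct, diagonal_mul_diagonal, mulVec_diagonal]
  exact Finset.sum_congr rfl fun i _ => by ring

end SquaredSystem

theorem eq_of_smul_eq_smul_of_dotProduct_eq_one {ι K : Type*} [Fintype ι] [Field K] {L u v : ι → K}
    {a b : K} (ha : a ≠ 0) (h : b • u = a • v) (hu : L ⬝ᵥ u = 1) (hv : L ⬝ᵥ v = 1) : v = u := by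
  have hab : b = a := by
    simpa [hu, hv] using congrArg (dotProduct L) h
  exact smul_right_injective _ ha (hab ▸ h).symm

theorem squared_solution_proportional_general
    (n : ℕ) (l : Fin n → ℝ)
    (hneg : ∀ i, l i < 0) (hinj : Function.Injective l)
    (Ψ : Matrix (Fin n) (Fin n) ℝ) (hΨ : Ψ = Matrix.of fun i j => -1 / (l i + l j))
    (Λ : Matrix (Fin n) (Fin n) ℝ) (hΛ : Λ = Matrix.diagonal l)
    (I' : Finset (Fin n))
    (s : Fin n → ℝ) (hs1 : ∀ i ∈ I', s i = 1 ∨ s i = -1)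
    (β γ : Fin n → ℝ) (μ : ℝ)
    (hβsupp : ∀ i, β i ≠ 0 ↔ i ∈ I')
    (h1 : (diagonal γ * Ψ * diagonal γ) *ᵥ β = μ • ((Λ * Λ) *ᵥ β))
    (hβn : β ⬝ᵥ (Λ * Λ) *ᵥ β = 1)
    (hγs : γ = fun i => s i * β i) :
    (∀ x : Fin n → ℝ, (∀ i ∉ I', x i = 0) →
        (∀ i ∈ I', ((diagonal s * Ψ * diagonal s) *ᵥ x) i = (l i) ^ 2) →
        ∃ t : ℝ, ∀ i, (β i) ^ 2 = t * x i) ∧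
      ∀ β' γ' : Fin n → ℝ, ∀ μ' : ℝ,
        (∀ i, β' i ≠ 0 ↔ i ∈ I') → (∀ i, γ' i ≠ 0 ↔ i ∈ I') →
        (diagonal γ' * Ψ * diagonal γ') *ᵥ β' = μ' • ((Λ * Λ) *ᵥ β') →
        (diagonal β' * Ψ * diagonal β') *ᵥ γ' = μ' • ((Λ * Λ) *ᵥ γ') →
        β' ⬝ᵥ (Λ * Λ) *ᵥ β' = 1 → γ' ⬝ᵥ (Λ * Λ) *ᵥ γ' = 1 →
        γ' = (fun i => s i * β' i) →
        ∀ i, (β' i) ^ 2 = (β i) ^ 2 := by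
  subst hγs hΛ
  rw [dotProduct_diagonal_mul_diagonal_mulVec_self] at hβn
  have hs : ∀ i ∈ (I' : Set (Fin n)), s i ≠ 0 := fun i hi => by
    rcases hs1 i hi with h | h <;> simp [h]
  have unique_on {x y r : Fin n → ℝ} {a b : ℝ} :=
    (hΨ ▸ posDef_cauchy hneg hinj).smul_eq_smul_of_diagonal_mul_mul_diagonal_mulVec_eq_on hs
      (x := x) (y := y) (r := r) (a := a) (b := b)
  have sq_eq_zero_off {v : Fin n → ℝ} (hv : ∀ i, v i ≠ 0 ↔ i ∈ I') :
      ∀ i ∉ (I' : Set (Fin n)), v i ^ 2 = 0 :=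
    fun i hi => by simpa using mt (hv i).mp hi
  have hβsq := diagonal_mul_mul_diagonal_mulVec_sq_apply h1 fun i => (hβsupp i).mpr
  have hμ : μ ≠ 0 := by
    rintro rfl
    have := unique_on (sq_eq_zero_off hβsupp) (y := 0) (r := 0) (a := 1) (b := 1) (fun _ _ => rfl)
      (fun i hi => by simp [hβsq i hi]) (by simp)
    rw [one_smul, one_smul] at this
    simp [this] at hβn
  refine ⟨fun x hx hxl => ⟨μ, fun i => ?_⟩, ?_⟩
  · have := unique_on (sq_eq_zero_off hβsupp) hx hβsq (b := 1) fun i hi =>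
      (hxl i hi).trans (one_mul _).symm
    simpa using congrFun this i
  rintro β' _ μ' hβ' - h1' - hβn' - rfl
  rw [dotProduct_diagonal_mul_diagonal_mulVec_self] at hβn'
  have hβ'sq := diagonal_mul_mul_diagonal_mulVec_sq_apply h1' fun i => (hβ' i).mpr
  exact congrFun (eq_of_smul_eq_smul_of_dotProduct_eq_one hμ
    (unique_on (sq_eq_zero_off hβsupp) (sq_eq_zero_off hβ') hβsq hβ'sq) hβn hβn')

theorem squared_solution_proportional
    (n : ℕ) (l : Fin n → ℝ)
    (hneg : ∀ i, l i < 0) (hinj : Function.Injective l)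
    (Ψ : Matrix (Fin n) (Fin n) ℝ) (hΨ : Ψ = Matrix.of fun i j => -1 / (l i + l j))
    (Λ : Matrix (Fin n) (Fin n) ℝ) (hΛ : Λ = Matrix.diagonal l)
    (I' : Finset (Fin n)) (hI' : I'.Nonempty)
    (s : Fin n → ℝ) (hs1 : ∀ i ∈ I', s i = 1 ∨ s i = -1) (hs0 : ∀ i ∉ I', s i = 0)
    (β γ : Fin n → ℝ) (μ : ℝ)
    (hβsupp : ∀ i, β i ≠ 0 ↔ i ∈ I') (hγsupp : ∀ i, γ i ≠ 0 ↔ i ∈ I')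
    (h1 : (diagonal γ * Ψ * diagonal γ) *ᵥ β = μ • ((Λ * Λ) *ᵥ β))
    (h2 : (diagonal β * Ψ * diagonal β) *ᵥ γ = μ • ((Λ * Λ) *ᵥ γ))
    (hβn : β ⬝ᵥ (Λ * Λ) *ᵥ β = 1) (hγn : γ ⬝ᵥ (Λ * Λ) *ᵥ γ = 1)
    (hγs : γ = fun i => s i * β i) :
    (∀ x : Fin n → ℝ, (∀ i ∉ I', x i = 0) →
        (∀ i ∈ I', ((diagonal s * Ψ * diagonal s) *ᵥ x) i = (l i) ^ 2) →
        ∃ t : ℝ, ∀ i, (β i) ^ 2 = t * x i) ∧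
      ∀ β' γ' : Fin n → ℝ, ∀ μ' : ℝ,
        (∀ i, β' i ≠ 0 ↔ i ∈ I') → (∀ i, γ' i ≠ 0 ↔ i ∈ I') →
        (diagonal γ' * Ψ * diagonal γ') *ᵥ β' = μ' • ((Λ * Λ) *ᵥ β') →
        (diagonal β' * Ψ * diagonal β') *ᵥ γ' = μ' • ((Λ * Λ) *ᵥ γ') →
        β' ⬝ᵥ (Λ * Λ) *ᵥ β' = 1 → γ' ⬝ᵥ (Λ * Λ) *ᵥ γ' = 1 →
        γ' = (fun i => s i * β' i) →
        ∀ i, (β' i) ^ 2 = (β i) ^ 2 :=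
  squared_solution_proportional_general n l hneg hinj Ψ hΨ Λ hΛ I' s hs1 β γ μ hβsupp h1 hβn hγs
end
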